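/- arXiv:math/0104091 — 4 statements merged into one kernel-verified Lean document; each statement's English description precedes it below -/
import Mathlib

section
/- For u(x) = |x|^{4-n} in ℝⁿ \ {0} with n ≥ 5, the Pohozaev boundary term B(r,x,u,∇u,∇²u,∇³u) = -((n-2)/2) Δu ∂u/∂ν - (r/2)|Δu|² + ((n-4)/2) u ∂(Δu)/∂ν + ⟨x,∇u⟩ ∂(Δu)/∂ν - Δu Σᵢ xᵢ ∂uᵢ/∂ν vanishes identically on ∂B_r for every r > 0. -/
open MeasureTheory Metric Set

noncomputable section

abbrev En (n : ℕ) := EuclideanSpace ℝ (Fin n)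

/-- Partial derivative `∂u/∂xᵢ`. -/
def pd {n : ℕ} (i : Fin n) (u : En n → ℝ) (x : En n) : ℝ :=
  fderiv ℝ u x (EuclideanSpace.single i 1)

/-- The Laplacian with the paper's sign convention `Δφ = -∑ ∂²φ/∂xᵢ²`. -/
def lap {n : ℕ} (u : En n → ℝ) (x : En n) : ℝ :=
  -∑ i, pd i (pd i u) x

/-- Normal derivative `∂u/∂ν` on `∂B_r`: `ν = x/r`, so `∂u/∂ν = (1/r) ∑ xᵢ ∂u/∂xᵢ`. -/
def ndiv {n : ℕ} (r : ℝ) (u : En n → ℝ) (x : En n) : ℝ :=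
  (∑ i, x i * pd i u x) / r

/-- The Pohozaev boundary term
`B = -((n-2)/2) Δu ∂u/∂ν - (r/2)|Δu|² + ((n-4)/2) u ∂(Δu)/∂ν + ⟨x,∇u⟩ ∂(Δu)/∂ν
     - Δu ∑ᵢ xᵢ ∂uᵢ/∂ν`. -/
def Bterm (n : ℕ) (r : ℝ) (u : En n → ℝ) (x : En n) : ℝ :=
  -(((n : ℝ) - 2) / 2) * lap u x * ndiv r u x
  - (r / 2) * (lap u x) ^ 2
  + (((n : ℝ) - 4) / 2) * u x * ndiv r (lap u) x
  + (∑ i, x i * pd i u x) * ndiv r (lap u) x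
  - lap u x * ∑ i, x i * ndiv r (pd i u) x

/-! `u = ‖x‖ ^ a` with `a = 4 - n` is homogeneous of degree `a`, so by Euler's identity
`x · ∇f = (deg f) f` applied to `u`, `∂ᵢu` and `Δu = -a (a + n - 2) ‖x‖ ^ (a - 2) = -2a ‖x‖ ^ (a - 2)`,
every term of `B` on `‖x‖ = r` is a multiple of `a² r ^ (2a - 3)`. The coefficients are
`(n - 2) - 2 + (a - 2) - 2 (a - 2) + 2 (a - 1) = n + a - 4 = 0`. -/

open scoped Topology

theorem Real.rpow_sub_two_mul_sq {t : ℝ} (ht : t ≠ 0) (p : ℝ) : t ^ (p - 2) * t ^ 2 = t ^ p := by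
  rw [← Nat.cast_ofNat, Real.rpow_sub_natCast ht, div_mul_cancel₀ _ (pow_ne_zero 2 ht)]

section NormRpow

variable {E : Type*} [NormedAddCommGroup E] [InnerProductSpace ℝ E]

theorem hasFDerivAt_norm_rpow_of_ne_zero {x : E} (hx : x ≠ 0) (p : ℝ) :
    HasFDerivAt (fun y : E ↦ ‖y‖ ^ p) ((p * ‖x‖ ^ (p - 2)) • innerSL ℝ x) x := by
  -- `‖y‖ ^ p = (‖y‖ ^ 2) ^ (p / 2)`, and `‖·‖ ^ 2` is smooth with nonzero value at `x`
  convert! ((hasStrictFDerivAt_norm_sq x).rpow_const (p := p / 2) (by simp [hx])).hasFDerivAt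
    using 0
  simp_rw [← Real.rpow_natCast_mul (norm_nonneg _), ← Nat.cast_smul_eq_nsmul ℝ, smul_smul]
  ring_nf

end NormRpow

section Euclidean

variable {n : ℕ}

theorem pd_of_hasFDerivAt {u : En n → ℝ} {u' : En n →L[ℝ] ℝ} {x : En n} (h : HasFDerivAt u u' x)
    (i : Fin n) : pd i u x = u' (EuclideanSpace.single i 1) := by
  rw [pd, h.fderiv]

theorem pd_congr {u v : En n → ℝ} {x : En n} (h : u =ᶠ[𝓝 x] v) (i : Fin n) :
    pd i u x = pd i v x := by
  rw [pd, pd, h.fderiv_eq]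

theorem sum_coord_mul_pd (u : En n → ℝ) (x : En n) :
    ∑ i, x i * pd i u x = fderiv ℝ u x x := by
  rw [← congrArg (fderiv ℝ u x) ((EuclideanSpace.basisFun (Fin n) ℝ).sum_repr x)]
  simp [pd, map_sum]

theorem sum_coord_mul_coord (x : En n) : ∑ i, x i * x i = ‖x‖ ^ 2 := by
  rw [EuclideanSpace.norm_sq_eq]
  simp [sq]

theorem pd_norm_rpow {x : En n} (hx : x ≠ 0) (p : ℝ) (i : Fin n) :
    pd i (fun y ↦ ‖y‖ ^ p) x = p * ‖x‖ ^ (p - 2) * x i := by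
  simp [pd_of_hasFDerivAt (hasFDerivAt_norm_rpow_of_ne_zero hx p),
    EuclideanSpace.inner_single_right, mul_assoc]

theorem sum_coord_mul_pd_norm_rpow {x : En n} (hx : x ≠ 0) (p : ℝ) :
    ∑ i, x i * pd i (fun y ↦ ‖y‖ ^ p) x = p * ‖x‖ ^ p := by
  rw [sum_coord_mul_pd, (hasFDerivAt_norm_rpow_of_ne_zero hx p).fderiv, smul_apply,
    innerSL_apply_apply, real_inner_self_eq_norm_sq, smul_eq_mul, mul_assoc,
    Real.rpow_sub_two_mul_sq (norm_ne_zero_iff.mpr hx)]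

theorem pd_norm_rpow_eventuallyEq {x : En n} (hx : x ≠ 0) (p : ℝ) (i : Fin n) :
    pd i (fun y ↦ ‖y‖ ^ p) =ᶠ[𝓝 x] fun y ↦ p * ‖y‖ ^ (p - 2) * y i := by
  filter_upwards [eventually_ne_nhds hx] with y hy using pd_norm_rpow hy p i

theorem pd_pd_norm_rpow {x : En n} (hx : x ≠ 0) (p : ℝ) (i j : Fin n) :
    pd j (pd i (fun y ↦ ‖y‖ ^ p)) x =
      p * (‖x‖ ^ (p - 2) * (if i = j then 1 else 0) + (p - 2) * ‖x‖ ^ (p - 2 - 2) * x i * x j) := by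
  have h : HasFDerivAt (fun y : En n ↦ p * ‖y‖ ^ (p - 2) * y i) _ x :=
    ((hasFDerivAt_norm_rpow_of_ne_zero hx (p - 2)).const_mul p).mul
      (EuclideanSpace.proj (𝕜 := ℝ) i).hasFDerivAt
  rw [pd_congr (pd_norm_rpow_eventuallyEq hx p i), pd_of_hasFDerivAt h]
  simp only [add_apply, smul_apply, PiLp.proj_apply, PiLp.single_apply, smul_eq_mul, mul_ite,
    mul_one, mul_zero, coe_innerSL_apply, EuclideanSpace.inner_single_right, Real.ringHom_apply,
    one_mul]
  split_ifs <;> ring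

theorem sum_coord_mul_pd_pd_norm_rpow {x : En n} (hx : x ≠ 0) (p : ℝ) (i : Fin n) :
    ∑ j, x j * pd j (pd i (fun y ↦ ‖y‖ ^ p)) x = (p - 1) * pd i (fun y ↦ ‖y‖ ^ p) x := by
  have hsq := Real.rpow_sub_two_mul_sq (norm_ne_zero_iff.mpr hx) (p - 2)
  calc ∑ j, x j * pd j (pd i (fun y ↦ ‖y‖ ^ p)) x
      = ∑ j, (p * ‖x‖ ^ (p - 2) * (if i = j then x j else 0)
          + p * (p - 2) * ‖x‖ ^ (p - 2 - 2) * x i * (x j * x j)) := by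
        refine Finset.sum_congr rfl fun j _ ↦ ?_
        rw [pd_pd_norm_rpow hx]
        split_ifs <;> ring
    _ = p * ‖x‖ ^ (p - 2) * x i + p * (p - 2) * ‖x‖ ^ (p - 2 - 2) * x i * ‖x‖ ^ 2 := by
        rw [Finset.sum_add_distrib, ← Finset.mul_sum, ← Finset.mul_sum, Finset.sum_ite_eq,
          sum_coord_mul_coord, if_pos (Finset.mem_univ i)]
    _ = (p - 1) * pd i (fun y ↦ ‖y‖ ^ p) x := by
        rw [pd_norm_rpow hx]
        linear_combination (p * (p - 2) * x i) * hsq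

theorem lap_norm_rpow {x : En n} (hx : x ≠ 0) (p : ℝ) :
    lap (fun y ↦ ‖y‖ ^ p) x = -(p * (p + n - 2)) * ‖x‖ ^ (p - 2) := by
  have hsq := Real.rpow_sub_two_mul_sq (norm_ne_zero_iff.mpr hx) (p - 2)
  calc lap (fun y ↦ ‖y‖ ^ p) x
      = -∑ i, (p * ‖x‖ ^ (p - 2) + p * (p - 2) * ‖x‖ ^ (p - 2 - 2) * (x i * x i)) := by
        rw [lap]
        congr 1
        refine Finset.sum_congr rfl fun i _ ↦ ?_
        rw [pd_pd_norm_rpow hx, if_pos rfl]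
        ring
    _ = -(n * (p * ‖x‖ ^ (p - 2)) + p * (p - 2) * ‖x‖ ^ (p - 2 - 2) * ‖x‖ ^ 2) := by
        rw [Finset.sum_add_distrib, Finset.sum_const, ← Finset.mul_sum, sum_coord_mul_coord,
          Finset.card_univ, Fintype.card_fin, nsmul_eq_mul]
    _ = -(p * (p + n - 2)) * ‖x‖ ^ (p - 2) := by
        linear_combination (-(p * (p - 2))) * hsq

theorem sum_coord_mul_ndiv_pd_norm_rpow {x : En n} (hx : x ≠ 0) (r p : ℝ) :
    ∑ i, x i * ndiv r (pd i (fun y ↦ ‖y‖ ^ p)) x = (p - 1) * ndiv r (fun y ↦ ‖y‖ ^ p) x := by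
  simp only [ndiv, sum_coord_mul_pd_pd_norm_rpow hx, Finset.mul_sum, Finset.sum_div]
  exact Finset.sum_congr rfl fun i _ ↦ by ring

theorem sum_coord_mul_pd_lap_norm_rpow {x : En n} (hx : x ≠ 0) (p : ℝ) :
    ∑ i, x i * pd i (lap fun y ↦ ‖y‖ ^ p) x = -(p * (p + n - 2)) * ((p - 2) * ‖x‖ ^ (p - 2)) := by
  have hlap : lap (fun y ↦ ‖y‖ ^ p) =ᶠ[𝓝 x] fun y ↦ -(p * (p + n - 2)) * ‖y‖ ^ (p - 2) := by
    filter_upwards [eventually_ne_nhds hx] with y hy using lap_norm_rpow hy p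
  rw [sum_coord_mul_pd, hlap.fderiv_eq,
    fderiv_const_mul (hasFDerivAt_norm_rpow_of_ne_zero hx (p - 2)).differentiableAt, smul_apply,
    smul_eq_mul, ← sum_coord_mul_pd, sum_coord_mul_pd_norm_rpow hx]

end Euclidean

theorem Bterm_fundamental_vanishes_general {n : ℕ} (r : ℝ) (hr : 0 < r) :
    ∀ x ∈ sphere (0 : En n) r,
      Bterm n r (fun y => ‖y‖ ^ ((4 : ℝ) - n)) x = 0 := by
  intro x hx
  have hxr : ‖x‖ = r := mem_sphere_zero_iff_norm.mp hx
  have hx0 : x ≠ 0 := norm_pos_iff.mp (hxr ▸ hr)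
  rw [Bterm, sum_coord_mul_ndiv_pd_norm_rpow hx0]
  simp only [ndiv, sum_coord_mul_pd_norm_rpow hx0, sum_coord_mul_pd_lap_norm_rpow hx0,
    lap_norm_rpow hx0]
  rw [← Real.rpow_sub_two_mul_sq (norm_ne_zero_iff.mpr hx0) (4 - n), hxr]
  field_simp
  ring

/-- For `u(x) = |x|^{4-n}`, `n ≥ 5`, the Pohozaev boundary term vanishes identically
on `∂B_r` for every `r > 0`. -/
theorem Bterm_fundamental_vanishes {n : ℕ} (hn : 5 ≤ n) (r : ℝ) (hr : 0 < r) :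
    ∀ x ∈ sphere (0 : En n) r,
      Bterm n r (fun y => ‖y‖ ^ ((4 : ℝ) - n)) x = 0 :=
  Bterm_fundamental_vanishes_general r hr
end
end

section
/- Let M be a k×k real symmetric matrix with M_{ii} ≥ 0 and M_{ij} < 0 for i ≠ j, with least eigenvalue ρ. Suppose λ₁,…,λ_k > 0 and μ¹,…,μ^k ≥ 0 satisfy Σₗ M_{lj} λₗ = c λⱼ μʲ for all j, where c > 0 is a constant. Then ρ ≥ 0. -/
open Finset

/-- If a real symmetric `k×k` matrix `M` with non-negative diagonal and strictly negative
off-diagonal entries, with least eigenvalue `ρ`, satisfies `∑ₗ M_{lj} λₗ = c λⱼ μʲ` for all `j`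
with `λⱼ > 0`, `μʲ ≥ 0`, `c > 0`, then `ρ ≥ 0`. -/
theorem least_eigenvalue_nonneg {k : ℕ}
    (M : Matrix (Fin k) (Fin k) ℝ) (hsymm : M.IsSymm)
    (hdiag : ∀ i, 0 ≤ M i i) (hoff : ∀ i j, i ≠ j → M i j < 0)
    (ρ : ℝ)
    (hρeig : ∃ v : Fin k → ℝ, v ≠ 0 ∧ M.mulVec v = ρ • v)
    (hρmin : ∀ ρ' : ℝ, (∃ v : Fin k → ℝ, v ≠ 0 ∧ M.mulVec v = ρ' • v) → ρ ≤ ρ')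
    (lam mu : Fin k → ℝ) (c : ℝ) (hc : 0 < c)
    (hlam : ∀ j, 0 < lam j) (hmu : ∀ j, 0 ≤ mu j)
    (heq : ∀ j, ∑ l, M l j * lam l = c * lam j * mu j) :
    0 ≤ ρ := by
  by_contra hρ
  push_neg at hρ
  obtain ⟨v, hv, hMv⟩ := hρeig
  obtain ⟨i, hi⟩ := Function.ne_iff.mp hv
  simp only [Pi.zero_apply] at hi
  have hne : (Finset.univ : Finset (Fin k)).Nonempty := ⟨i, mem_univ i⟩
  obtain ⟨j, -, hj⟩ := Finset.exists_max_image Finset.univ (fun l => |v l| / lam l) hne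
  have h2 : 0 < |v j| / lam j :=
    lt_of_lt_of_le (div_pos (abs_pos.mpr hi) (hlam i)) (hj i (mem_univ i))
  have hvj : 0 < |v j| := by
    have h3 : |v j| = |v j| / lam j * lam j := (div_mul_cancel₀ _ (hlam j).ne').symm
    rw [h3]; exact mul_pos h2 (hlam j)
  obtain ⟨w, hwMv, hwj, hwle⟩ :
      ∃ w : Fin k → ℝ, M.mulVec w = ρ • w ∧ w j = |v j| ∧ ∀ l, w l ≤ |v l| := by
    rcases le_or_gt 0 (v j) with h | h
    · exact ⟨v, hMv, (abs_of_nonneg h).symm, fun l => le_abs_self _⟩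
    · refine ⟨-v, ?_, ?_, fun l => neg_le_abs _⟩
      · rw [Matrix.mulVec_neg, hMv, smul_neg]
      · simp [abs_of_neg h]
  -- key pointwise bound
  have key : ∀ l, M l j * (w j / lam j * lam l) ≤ M l j * w l := by
    intro l
    rcases eq_or_ne l j with rfl | hne'
    · rw [div_mul_cancel₀ _ (hlam l).ne']
    · have h1 : w l ≤ w j / lam j * lam l := by
        have := hj l (mem_univ l)
        have h4 : |v l| ≤ |v j| / lam j * lam l := by
          have := mul_le_mul_of_nonneg_right this (hlam l).le
          rwa [div_mul_cancel₀ _ (hlam l).ne'] at this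
        calc w l ≤ |v l| := hwle l
          _ ≤ |v j| / lam j * lam l := h4
          _ = w j / lam j * lam l := by rw [hwj]
      exact mul_le_mul_of_nonpos_left h1 (hoff l j hne').le
  have hsum : w j / lam j * (c * lam j * mu j) ≤ ∑ l, M l j * w l := by
    calc w j / lam j * (c * lam j * mu j)
        = ∑ l, M l j * (w j / lam j * lam l) := by
          rw [← heq j, Finset.mul_sum]
          exact Finset.sum_congr rfl fun l _ => by ring
      _ ≤ ∑ l, M l j * w l := Finset.sum_le_sum fun l _ => key l
  have hmul : (M.mulVec w) j = ∑ l, M l j * w l := by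
    simp only [Matrix.mulVec, dotProduct]
    exact Finset.sum_congr rfl fun l _ => by rw [hsymm.apply j l]
  have heig : (M.mulVec w) j = ρ * w j := by rw [hwMv]; rfl
  have hwjpos : 0 < w j := hwj ▸ hvj
  have hlhs : 0 ≤ w j / lam j * (c * lam j * mu j) := by
    apply mul_nonneg (div_pos hwjpos (hlam j)).le
    exact mul_nonneg (mul_nonneg hc.le (hlam j).le) (hmu j)
  nlinarith [hsum, hmul, heig, hlhs, mul_pos hwjpos (neg_pos.mpr hρ)]
end

section
/- The function ξ(x) = (1 + k|x|²)^{(4-n)/2} on ℝⁿ, n ≥ 5, with k² = f₀ / (2n(n-2)(n+2)) for a constant f₀ > 0, satisfies Δ²ξ = ((n-4)/2) f₀ ξ^{(n+4)/(n-4)}, ξ > 0, ξ(0) = 1, and ∇ξ(0) = 0. -/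
open MeasureTheory Metric Set

noncomputable section

/-! With `Q = 1 + k|x|²`, the Laplacian of a radial function `φ(|x|²)` is
`-(2n φ' + 4|x|² φ'')(|x|²)`, so it maps `c Q^A` to a combination of `Q^(A-1)` and `Q^(A-2)`,
with the coefficient of `Q^(A-1)` proportional to `n + 2(A-1)`. For `A = (4-n)/2` these
coefficients vanish at exactly the right moments: `Δξ` involves `Q^(A-1)` and `Q^(A-2)`, and in
`Δ²ξ` the two contributions to `Q^(A-3)` cancel, leaving a multiple of `Q^(A-4) = ξ^((n+4)/(n-4))`. -/

theorem hasGradientAt_comp_norm_sq {E : Type*} [NormedAddCommGroup E] [InnerProductSpace ℝ E]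
    [CompleteSpace E] {φ : ℝ → ℝ} {d : ℝ} {x : E} (h : HasDerivAt φ d (‖x‖ ^ 2)) :
    HasGradientAt (fun y => φ (‖y‖ ^ 2)) ((2 * d) • x) x := by
  rw [hasGradientAt_iff_hasFDerivAt]
  refine (h.comp_hasFDerivAt x (hasFDerivAt_id x).norm_sq).congr_fderiv ?_
  ext v
  simp [InnerProductSpace.toDual_apply_apply]
  ring

theorem hasDerivAt_one_add_mul_rpow (k A : ℝ) {t : ℝ} (ht : 0 < 1 + k * t) :
    HasDerivAt (fun t => (1 + k * t) ^ A) (k * A * (1 + k * t) ^ (A - 1)) t := by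
  simpa using (((hasDerivAt_id t).const_mul k).const_add 1).rpow_const (p := A) (Or.inl ht.ne')

section

variable {n : ℕ}

theorem pd_eq_of_hasGradientAt (i : Fin n) {u : En n → ℝ} {g x : En n} (h : HasGradientAt u g x) :
    pd i u x = g i := by
  simp [pd, h.hasFDerivAt.fderiv, InnerProductSpace.toDual_apply_apply,
    EuclideanSpace.inner_single_right]

theorem pd_mul_coord (i : Fin n) {u : En n → ℝ} {x : En n} (hu : DifferentiableAt ℝ u x) :
    pd i (fun y => u y * y i) x = u x + x i * pd i u x := by
  have hcoord : DifferentiableAt ℝ (fun y : En n => y i) x :=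
    (EuclideanSpace.proj (𝕜 := ℝ) i).differentiableAt
  have hfd : fderiv ℝ (fun y : En n => y i) x = EuclideanSpace.proj i :=
    (EuclideanSpace.proj (𝕜 := ℝ) i).fderiv
  simp [pd, fderiv_fun_mul hu hcoord, hfd]

theorem lap_comp_norm_sq {φ φ' φ'' : ℝ → ℝ} (hφ : ∀ t, 0 ≤ t → HasDerivAt φ (φ' t) t)
    (x : En n) (hφ' : HasDerivAt φ' (φ'' (‖x‖ ^ 2)) (‖x‖ ^ 2)) :
    lap (fun y => φ (‖y‖ ^ 2)) x = -(2 * n * φ' (‖x‖ ^ 2) + 4 * ‖x‖ ^ 2 * φ'' (‖x‖ ^ 2)) := by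
  have hfirst (i : Fin n) : pd i (fun y => φ (‖y‖ ^ 2)) = fun y => 2 * φ' (‖y‖ ^ 2) * y i := by
    funext y
    simp [pd_eq_of_hasGradientAt i (hasGradientAt_comp_norm_sq (hφ _ (sq_nonneg ‖y‖)))]
  have hgrad := hasGradientAt_comp_norm_sq (hφ'.const_mul 2)
  have hsecond (i : Fin n) :
      pd i (pd i (fun y => φ (‖y‖ ^ 2))) x = 2 * φ' (‖x‖ ^ 2) + 4 * φ'' (‖x‖ ^ 2) * x i ^ 2 := by
    rw [hfirst, pd_mul_coord i hgrad.differentiableAt, pd_eq_of_hasGradientAt i hgrad]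
    simp only [PiLp.smul_apply, smul_eq_mul]
    ring
  have hsum : ∑ i, x i ^ 2 = ‖x‖ ^ 2 := by simp [EuclideanSpace.norm_sq_eq]
  simp only [lap, hsecond, Finset.sum_add_distrib, ← Finset.mul_sum, hsum, Finset.sum_const,
    Finset.card_univ, Fintype.card_fin, nsmul_eq_mul]
  ring

theorem lap_add_rpow {k : ℝ} (hk : 0 ≤ k) (c₁ c₂ A B : ℝ) (x : En n) :
    lap (fun y => c₁ * (1 + k * ‖y‖ ^ 2) ^ A + c₂ * (1 + k * ‖y‖ ^ 2) ^ B) x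
      = -2 * k * c₁ * A * (n + 2 * (A - 1)) * (1 + k * ‖x‖ ^ 2) ^ (A - 1)
        + 4 * k * c₁ * A * (A - 1) * (1 + k * ‖x‖ ^ 2) ^ (A - 2)
        + -2 * k * c₂ * B * (n + 2 * (B - 1)) * (1 + k * ‖x‖ ^ 2) ^ (B - 1)
        + 4 * k * c₂ * B * (B - 1) * (1 + k * ‖x‖ ^ 2) ^ (B - 2) := by
  have hQ {t : ℝ} (ht : 0 ≤ t) : 0 < 1 + k * t := by positivity
  have hpow (C : ℝ) {t : ℝ} (ht : 0 ≤ t) := hasDerivAt_one_add_mul_rpow k C (hQ ht)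
  have hφ (t : ℝ) (ht : 0 ≤ t) : HasDerivAt (fun t => c₁ * (1 + k * t) ^ A + c₂ * (1 + k * t) ^ B)
      (k * (c₁ * A * (1 + k * t) ^ (A - 1) + c₂ * B * (1 + k * t) ^ (B - 1))) t := by
    refine (((hpow A ht).const_mul c₁).add ((hpow B ht).const_mul c₂)).congr_deriv ?_
    ring
  have hφ' : HasDerivAt (fun t => k * (c₁ * A * (1 + k * t) ^ (A - 1) + c₂ * B * (1 + k * t) ^ (B - 1)))
      (k ^ 2 * (c₁ * A * (A - 1) * (1 + k * ‖x‖ ^ 2) ^ (A - 2)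
        + c₂ * B * (B - 1) * (1 + k * ‖x‖ ^ 2) ^ (B - 2))) (‖x‖ ^ 2) := by
    refine ((((hpow (A - 1) (sq_nonneg ‖x‖)).const_mul (c₁ * A)).add
      ((hpow (B - 1) (sq_nonneg ‖x‖)).const_mul (c₂ * B))).const_mul k).congr_deriv ?_
    rw [sub_sub, sub_sub, one_add_one_eq_two]
    ring
  rw [lap_comp_norm_sq (φ'' := fun t => k ^ 2 * (c₁ * A * (A - 1) * (1 + k * t) ^ (A - 2)
      + c₂ * B * (B - 1) * (1 + k * t) ^ (B - 2))) hφ x hφ']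
  -- `k|x|² Q^(C-2) = Q^(C-1) - Q^(C-2)` turns the `|x|² φ''` term into powers of `Q`.
  have hshift (C : ℝ) : (1 + k * ‖x‖ ^ 2) ^ (C - 1)
      = (1 + k * ‖x‖ ^ 2) ^ (C - 2) * (1 + k * ‖x‖ ^ 2) := by
    rw [← Real.rpow_add_one (hQ (sq_nonneg ‖x‖)).ne']
    ring_nf
  linear_combination (4 * k * c₁ * A * (A - 1)) * hshift A + (4 * k * c₂ * B * (B - 1)) * hshift B

end

theorem bubble_solution_general {n : ℕ} (hn : 5 ≤ n) (f₀ k : ℝ) (hk : 0 < k)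
    (hkdef : k ^ 2 = f₀ / (2 * n * ((n : ℝ) - 2) * ((n : ℝ) + 2))) :
    (∀ x : En n,
      lap (lap (fun y : En n => (1 + k * ‖y‖ ^ 2) ^ (((4 : ℝ) - n) / 2))) x
        = ((n : ℝ) - 4) / 2 * f₀ *
          ((1 + k * ‖x‖ ^ 2) ^ (((4 : ℝ) - n) / 2)) ^ (((n : ℝ) + 4) / ((n : ℝ) - 4))) ∧
    (∀ x : En n, 0 < (1 + k * ‖x‖ ^ 2) ^ (((4 : ℝ) - n) / 2)) ∧
    (1 + k * ‖(0 : En n)‖ ^ 2) ^ (((4 : ℝ) - n) / 2) = 1 ∧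
    gradient (fun y : En n => (1 + k * ‖y‖ ^ 2) ^ (((4 : ℝ) - n) / 2)) 0 = 0 := by
  have hn5 : (5 : ℝ) ≤ n := by exact_mod_cast hn
  have hf₀ : f₀ = k ^ 2 * (2 * n * ((n : ℝ) - 2) * ((n : ℝ) + 2)) := by
    rw [hkdef]; field_simp [show (n : ℝ) - 2 ≠ 0 by linarith]
  set p : ℝ := ((4 : ℝ) - n) / 2 with hp
  have hnp : (n : ℝ) = 4 - 2 * p := by rw [hp]; ring
  refine ⟨fun x => ?_, fun x => by positivity, by simp, ?_⟩
  · have hΔξ : lap (fun y : En n => (1 + k * ‖y‖ ^ 2) ^ p) = fun y =>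
        -4 * k * p * (1 + k * ‖y‖ ^ 2) ^ (p - 1) + 4 * k * p * (p - 1) * (1 + k * ‖y‖ ^ 2) ^ (p - 2) := by
      funext y
      rw [show (fun y : En n => (1 + k * ‖y‖ ^ 2) ^ p)
        = fun y => 1 * (1 + k * ‖y‖ ^ 2) ^ p + 0 * (1 + k * ‖y‖ ^ 2) ^ p by simp,
        lap_add_rpow hk.le]
      rw [hnp]; ring
    rw [hΔξ, lap_add_rpow hk.le, ← Real.rpow_mul (by positivity),
      show p * ((n + 4) / (n - 4)) = p - 2 - 2 by
        rw [hp]; field_simp [show (n : ℝ) - 4 ≠ 0 by linarith]; ring,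
      show p - 1 - 2 = p - 2 - 1 by ring, hf₀, hnp]
    ring
  · have h := hasGradientAt_comp_norm_sq (hasDerivAt_one_add_mul_rpow k p (t := ‖(0 : En n)‖ ^ 2)
      (by positivity))
    simpa using h.gradient

/-- The standard bubble `ξ(x) = (1 + k|x|²)^{(4-n)/2}` with
`k² = f₀/(2n(n-2)(n+2))`, `k, f₀ > 0`, solves `Δ²ξ = ((n-4)/2) f₀ ξ^{(n+4)/(n-4)}`,
is positive, and satisfies `ξ(0) = 1`, `∇ξ(0) = 0`. -/
theorem bubble_solution {n : ℕ} (hn : 5 ≤ n) (f₀ k : ℝ) (hf₀ : 0 < f₀) (hk : 0 < k)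
    (hkdef : k ^ 2 = f₀ / (2 * n * ((n : ℝ) - 2) * ((n : ℝ) + 2))) :
    (∀ x : En n,
      lap (lap (fun y : En n => (1 + k * ‖y‖ ^ 2) ^ (((4 : ℝ) - n) / 2))) x
        = ((n : ℝ) - 4) / 2 * f₀ *
          ((1 + k * ‖x‖ ^ 2) ^ (((4 : ℝ) - n) / 2)) ^ (((n : ℝ) + 4) / ((n : ℝ) - 4))) ∧
    (∀ x : En n, 0 < (1 + k * ‖x‖ ^ 2) ^ (((4 : ℝ) - n) / 2)) ∧
    (1 + k * ‖(0 : En n)‖ ^ 2) ^ (((4 : ℝ) - n) / 2) = 1 ∧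
    gradient (fun y : En n => (1 + k * ‖y‖ ^ 2) ^ (((4 : ℝ) - n) / 2)) 0 = 0 :=
  bubble_solution_general hn f₀ k hk hkdef
end
end

section
/- Let w₁, w₂ be positive C² functions on B₃ ⊂ ℝⁿ with -Δ_e w₁ = w₂ (where Δ_e is the Euclidean Laplacian Σ ∂²/∂xᵢ²) and both w₁, w₂ superharmonic (so their spherical averages w̄₁(t), w̄₂(t) around 0 are non-negative and non-increasing), with w̄₁, w̄₂ bounded near 0. Then there exists c = c(n) > 0 with w̄₁(t) ≥ c t² w̄₂(t) for all t ∈ (0,2]. -/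
open MeasureTheory Metric Set

noncomputable section

/-- The Euclidean Laplacian `Δ_e φ = ∑ ∂²φ/∂xᵢ²`. -/
def lapE {n : ℕ} (u : En n → ℝ) (x : En n) : ℝ :=
  ∑ i, pd i (pd i u) x

/-- The spherical average `w̄(t)` of `w` over `∂B_t(0)`. -/
def sAvg {n : ℕ} (w : En n → ℝ) (t : ℝ) : ℝ :=
  ⨍ x in sphere (0 : En n) t, w x ∂μH[(n : ℝ) - 1]

/-! The averaged equation says that the flux `t ^ (n - 1) * w̄₁'(t)` has derivative
`-t ^ (n - 1) * w̄₂(t)`. The flux is non-positive because `w̄₁` is non-increasing, so integrating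
from `0` and using that `w̄₂` is non-increasing gives `t ^ (n - 1) * w̄₁'(t) ≤ -w̄₂(t) * t ^ n / n`.
The flux is itself non-increasing, hence `w̄₁' ≤ -c' * t * w̄₂(t)` on `[t, 5t/4]`, and integrating
over this interval with `w̄₁ ≥ 0` gives `w̄₁(t) ≥ c * t ^ 2 * w̄₂(t)`.

Since `deriv` is `0` at points of non-differentiability, the averaged equation carries information
only once `w̄₁` is known to be twice differentiable. This follows from `w̄(t) = ⨍_{|x| = 1} w(t x)`
(scaling of Hausdorff measure) by differentiating under the integral sign. -/

open Filter Topology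
open scoped NNReal ENNReal Pointwise

namespace MeasureTheory

variable {α F : Type*} [MeasurableSpace α] [NormedAddCommGroup F] [NormedSpace ℝ F]

theorem average_smul_measure {μ : Measure α} {c : ℝ≥0∞} (hc₀ : c ≠ 0) (hc : c ≠ ∞) (f : α → F) :
    ⨍ x, f x ∂(c • μ) = ⨍ x, f x ∂μ := by
  rw [average_eq', average_eq', Measure.smul_apply, smul_smul, smul_eq_mul,
    ENNReal.mul_inv (.inl hc₀) (.inl hc), mul_right_comm, ENNReal.inv_mul_cancel hc₀ hc, one_mul]

theorem _root_.MeasurableEmbedding.average_map {β : Type*} [MeasurableSpace β] {μ : Measure α}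
    {g : α → β} (hg : MeasurableEmbedding g) (f : β → F) :
    ⨍ y, f y ∂μ.map g = ⨍ x, f (g x) ∂μ := by
  rw [average_eq, average_eq, hg.integral_map, measureReal_def, measureReal_def,
    Measure.map_apply hg.measurable .univ, preimage_univ]

theorem average_smul (μ : Measure α) (c : ℝ) (f : α → F) :
    ⨍ x, c • f x ∂μ = c • ⨍ x, f x ∂μ := by
  rw [average_eq, average_eq, integral_smul, smul_comm]

end MeasureTheory

theorem ae_norm_le_one_restrict_sphere {E : Type*} [NormedAddCommGroup E] [MeasurableSpace E]
    [OpensMeasurableSpace E] (μ : Measure E) :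
    ∀ᵐ x ∂μ.restrict (sphere (0 : E) 1), ‖x‖ ≤ 1 := by
  filter_upwards [ae_restrict_mem isClosed_sphere.measurableSet] with x hx
  exact (mem_sphere_zero_iff_norm.1 hx).le

section SphereScaling

variable {E F : Type*} [NormedAddCommGroup E] [NormedSpace ℝ E] [MeasurableSpace E] [BorelSpace E]
  [NormedAddCommGroup F] [NormedSpace ℝ F]

theorem hausdorffMeasure_restrict_sphere {d : ℝ} (hd : 0 ≤ d) {t : ℝ} (ht : 0 < t) :
    μH[d].restrict (sphere (0 : E) t)
      = (‖t‖₊ ^ d : ℝ≥0) • (μH[d].restrict (sphere (0 : E) 1)).map (t • ·) := by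
  have hsmul : MeasurableEmbedding (t • · : E → E) := measurableEmbedding_const_smul₀ ht.ne'
  ext A hA
  rw [Measure.smul_apply, hsmul.map_apply, Measure.restrict_apply hA,
    Measure.restrict_apply (hsmul.measurable hA)]
  convert Measure.hausdorffMeasure_smul₀ hd ht.ne' ((t • ·) ⁻¹' A ∩ sphere (0 : E) 1) using 2
  rw [smul_set_inter₀ ht.ne', preimage_smul₀ ht.ne', smul_inv_smul₀ ht.ne', smul_sphere' ht.ne',
    smul_zero, Real.norm_of_nonneg ht.le, mul_one]

theorem setAverage_sphere_eq {d : ℝ} (hd : 0 ≤ d) {t : ℝ} (ht : 0 < t) (w : E → F) :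
    ⨍ x in sphere (0 : E) t, w x ∂μH[d] = ⨍ x in sphere (0 : E) 1, w (t • x) ∂μH[d] := by
  have hc : ((‖t‖₊ ^ d : ℝ≥0) : ℝ≥0∞) ≠ 0 := by simp [ht.ne']
  rw [hausdorffMeasure_restrict_sphere hd ht, ← Measure.coe_nnreal_smul,
    average_smul_measure hc ENNReal.coe_ne_top,
    (measurableEmbedding_const_smul₀ ht.ne').average_map]


end SphereScaling

section RadialParametricIntegral

variable {E F : Type*} [NormedAddCommGroup E] [NormedSpace ℝ E] [MeasurableSpace E] [BorelSpace E]
  [ProperSpace E] [NormedAddCommGroup F] [NormedSpace ℝ F]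
  {ν : Measure E} {w : E → F} {R t : ℝ}

theorem hasDerivAt_integral_comp_smul [IsFiniteMeasure ν] (hν : ∀ᵐ x ∂ν, ‖x‖ ≤ 1)
    (hw : ContDiffOn ℝ 1 w (ball 0 R)) (ht : |t| < R) :
    HasDerivAt (fun s => ∫ x, w (s • x) ∂ν) (∫ x, fderiv ℝ w (t • x) x ∂ν) t := by
  obtain ⟨b, htb, hbR⟩ := exists_between ht
  have hε : 0 < b - |t| := sub_pos.2 htb
  replace hbR : closedBall (0 : E) b ⊆ ball 0 R := closedBall_subset_ball hbR
  have hmem : ∀ s ∈ ball t (b - |t|), ∀ x ∈ closedBall (0 : E) 1, s • x ∈ closedBall 0 b := by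
    intro s hs x hx
    rw [mem_ball, Real.dist_eq] at hs
    rw [mem_closedBall_zero_iff] at hx ⊢
    calc ‖s • x‖ = |s| * ‖x‖ := norm_smul s x
      _ ≤ |s| * 1 := by gcongr
      _ ≤ b := by linarith [abs_sub_abs_le_abs_sub s t]
  have ht_mem : t ∈ ball t (b - |t|) := mem_ball_self hε
  have hν_eq : ν.restrict (closedBall 0 1) = ν :=
    Measure.restrict_eq_self_of_ae_mem (by simpa only [mem_closedBall_zero_iff] using hν)
  have hint : ∀ {φ : E → F}, ContinuousOn φ (closedBall 0 1) → Integrable φ ν := fun hφ => by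
    simpa only [IntegrableOn, hν_eq] using
      hφ.integrableOn_compact (μ := ν) (isCompact_closedBall 0 1)
  have hw' : ContinuousOn (fderiv ℝ w) (ball 0 R) :=
    hw.continuousOn_fderiv_of_isOpen isOpen_ball le_rfl
  obtain ⟨C, hC⟩ := (isCompact_closedBall (0 : E) b).exists_bound_of_continuousOn (hw'.mono hbR)
  have hcont : ∀ s ∈ ball t (b - |t|), ContinuousOn (fun x => w (s • x)) (closedBall 0 1) ∧
      ContinuousOn (fun x => fderiv ℝ w (s • x) x) (closedBall 0 1) := fun s hs =>
    have hmaps : MapsTo (s • ·) (closedBall (0 : E) 1) (ball 0 R) := fun x hx =>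
      hbR (hmem s hs x hx)
    ⟨hw.continuousOn.comp (continuous_const_smul s).continuousOn hmaps,
      (hw'.comp (continuous_const_smul s).continuousOn hmaps).clm_apply continuousOn_id⟩
  refine (hasDerivAt_integral_of_dominated_loc_of_deriv_le (ball_mem_nhds t hε)
    (F' := fun s x => fderiv ℝ w (s • x) x) (bound := fun _ => C) ?_ (hint (hcont t ht_mem).1)
    (hint (hcont t ht_mem).2).aestronglyMeasurable ?_ (integrable_const C) ?_).2
  · filter_upwards [ball_mem_nhds t hε] with s hs
    exact (hint (hcont s hs).1).aestronglyMeasurable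
  · filter_upwards [hν] with x hx s hs
    have hCs := hC _ (hmem s hs x (mem_closedBall_zero_iff.2 hx))
    calc ‖fderiv ℝ w (s • x) x‖ ≤ ‖fderiv ℝ w (s • x)‖ * ‖x‖ := (fderiv ℝ w (s • x)).le_opNorm x
      _ ≤ C * 1 := mul_le_mul hCs hx (norm_nonneg x) ((norm_nonneg _).trans hCs)
      _ = C := mul_one C
  · filter_upwards [hν] with x hx s hs
    have hdiff : DifferentiableAt ℝ w (s • x) :=
      (hw.differentiableOn one_ne_zero).differentiableAt
        (isOpen_ball.mem_nhds (hbR (hmem s hs x (mem_closedBall_zero_iff.2 hx))))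
    simpa [Function.comp_def] using
      hdiff.hasFDerivAt.comp_hasDerivAt s ((hasDerivAt_id s).smul_const x)

theorem hasDerivAt_average_comp_smul (hν : ∀ᵐ x ∂ν, ‖x‖ ≤ 1)
    (hw : ContDiffOn ℝ 1 w (ball 0 R)) (ht : |t| < R) :
    HasDerivAt (fun s => ⨍ x, w (s • x) ∂ν) (⨍ x, fderiv ℝ w (t • x) x ∂ν) t := by
  by_cases hfin : ν univ = ∞
  · simpa [average_eq, measureReal_def, hfin] using hasDerivAt_const t (0 : F)
  · have : IsFiniteMeasure ν := ⟨lt_top_iff_ne_top.2 hfin⟩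
    simp_rw [average_eq]
    exact (hasDerivAt_integral_comp_smul hν hw ht).const_smul _

theorem differentiableAt_deriv_average_comp_smul (hν : ∀ᵐ x ∂ν, ‖x‖ ≤ 1)
    (hw : ContDiffOn ℝ 2 w (ball 0 R)) (ht₀ : t ≠ 0) (ht : |t| < R) :
    DifferentiableAt ℝ (deriv fun s => ⨍ x, w (s • x) ∂ν) t := by
  have hw₁ : ContDiffOn ℝ 1 w (ball 0 R) := hw.of_le (by norm_num)
  -- `Dw(s x) x = s⁻¹ u(s x)` with `u` of class `C¹`
  set u : E → F := fun y => fderiv ℝ w y y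
  have hu : ContDiffOn ℝ 1 u (ball 0 R) :=
    (hw.fderiv_of_isOpen isOpen_ball (by norm_num)).clm_apply contDiffOn_id
  have hnhds : {s : ℝ | s ≠ 0 ∧ |s| < R} ∈ 𝓝 t :=
    (isOpen_ne.inter (isOpen_lt continuous_abs continuous_const)).mem_nhds ⟨ht₀, ht⟩
  have heq : (deriv fun s => ⨍ x, w (s • x) ∂ν) =ᶠ[𝓝 t] fun s => s⁻¹ • ⨍ x, u (s • x) ∂ν := by
    filter_upwards [hnhds] with s ⟨hs₀, hs⟩
    rw [(hasDerivAt_average_comp_smul hν hw₁ hs).deriv, ← average_smul]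
    congr 1 with x
    simp only [u, map_smul, inv_smul_smul₀ hs₀]
  exact heq.differentiableAt_iff.2
    ((differentiableAt_inv ht₀).smul (hasDerivAt_average_comp_smul hν hu ht).differentiableAt)

end RadialParametricIntegral

section SphericalAverage

variable {n : ℕ} {w : En n → ℝ} {R t : ℝ}

theorem sAvg_eventuallyEq_average (hn : 1 ≤ n) (ht : 0 < t) :
    sAvg w =ᶠ[𝓝 t] fun s => ⨍ x in sphere (0 : En n) 1, w (s • x) ∂μH[(n : ℝ) - 1] :=
  eventually_of_mem (Ioi_mem_nhds ht) fun _ hs =>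
    setAverage_sphere_eq (sub_nonneg.2 (Nat.one_le_cast.2 hn)) hs w

theorem differentiableAt_sAvg (hn : 1 ≤ n) (hw : ContDiffOn ℝ 2 w (ball 0 R))
    (ht : t ∈ Ioo 0 R) : DifferentiableAt ℝ (sAvg w) t :=
  (sAvg_eventuallyEq_average hn ht.1).differentiableAt_iff.2
    (hasDerivAt_average_comp_smul (ae_norm_le_one_restrict_sphere _) (hw.of_le (by norm_num))
      ((abs_of_pos ht.1).trans_lt ht.2)).differentiableAt

theorem differentiableAt_deriv_sAvg (hn : 1 ≤ n) (hw : ContDiffOn ℝ 2 w (ball 0 R))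
    (ht : t ∈ Ioo 0 R) : DifferentiableAt ℝ (deriv (sAvg w)) t :=
  (sAvg_eventuallyEq_average hn ht.1).deriv.differentiableAt_iff.2
    (differentiableAt_deriv_average_comp_smul (ae_norm_le_one_restrict_sphere _) hw ht.1.ne'
      ((abs_of_pos ht.1).trans_lt ht.2))

end SphericalAverage

section RadialODE

variable {f g : ℝ → ℝ} {a R t : ℝ}

theorem hasDerivAt_rpow_mul_deriv {s : ℝ} (hs : 0 < s) (hf' : DifferentiableAt ℝ (deriv f) s)
    (hode : deriv (deriv f) s + a / s * deriv f s + g s = 0) :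
    HasDerivAt (fun r => r ^ a * deriv f r) (-(s ^ a * g s)) s := by
  refine ((Real.hasDerivAt_rpow_const (p := a) (.inl hs.ne')).mul hf'.hasDerivAt).congr_deriv ?_
  rw [Real.rpow_sub_one hs.ne']
  linear_combination s ^ a * hode

theorem rpow_mul_deriv_le_of_ode (ha : 0 < a + 1) (ht : 0 < t)
    (hf' : ∀ s ∈ Ioc 0 t, DifferentiableAt ℝ (deriv f) s)
    (hode : ∀ s ∈ Ioc 0 t, deriv (deriv f) s + a / s * deriv f s + g s = 0)
    (hfd : ∀ s ∈ Ioc 0 t, deriv f s ≤ 0) (hg : AntitoneOn g (Ioc 0 t)) :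
    t ^ a * deriv f t ≤ -(g t * t ^ (a + 1) / (a + 1)) := by
  -- `η t ≤ η ε ≤ g t * ε ^ (a + 1) / (a + 1)` for `0 < ε < t`, then let `ε → 0`
  set η : ℝ → ℝ := fun s => s ^ a * deriv f s + g t * s ^ (a + 1) / (a + 1)
  have hη : ∀ s ∈ Ioc 0 t, HasDerivAt η (-(s ^ a * g s) + g t * s ^ a) s := fun s hs => by
    refine (hasDerivAt_rpow_mul_deriv hs.1 (hf' s hs) (hode s hs)).add ?_
    refine (((Real.hasDerivAt_rpow_const (p := a + 1) (.inl hs.1.ne')).const_mul (g t)).div_const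
      (a + 1)).congr_deriv ?_
    rw [add_sub_cancel_right]
    field_simp
  have hη_anti : AntitoneOn η (Ioc 0 t) := by
    refine antitoneOn_of_deriv_nonpos (convex_Ioc 0 t)
      (fun s hs => (hη s hs).continuousAt.continuousWithinAt) ?_ ?_ <;> rw [interior_Ioc]
    · exact fun s hs => (hη s (Ioo_subset_Ioc_self hs)).differentiableAt.differentiableWithinAt
    · intro s hs
      rw [(hη s (Ioo_subset_Ioc_self hs)).deriv]
      have := hg ⟨hs.1, hs.2.le⟩ ⟨ht, le_rfl⟩ hs.2.le
      nlinarith [Real.rpow_nonneg hs.1.le a]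
  have hη_le : ∀ ε ∈ Ioo 0 t, η t ≤ g t * ε ^ (a + 1) / (a + 1) := fun ε hε => by
    have h₁ := hη_anti ⟨hε.1, hε.2.le⟩ ⟨ht, le_rfl⟩ hε.2.le
    have h₂ := mul_nonpos_of_nonneg_of_nonpos (Real.rpow_nonneg hε.1.le a) (hfd ε ⟨hε.1, hε.2.le⟩)
    simp only [η] at h₁ ⊢
    linarith
  have hlim : Tendsto (fun ε => g t * ε ^ (a + 1) / (a + 1)) (𝓝[>] 0) (𝓝 0) := by
    have := ((Real.continuousAt_rpow_const 0 (a + 1) (.inr ha.le)).const_mul (g t)).div_const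
      (a + 1)
    simpa [Real.zero_rpow ha.ne'] using this.tendsto.mono_left nhdsWithin_le_nhds
  have : η t ≤ 0 := ge_of_tendsto hlim (by filter_upwards [Ioo_mem_nhdsGT ht] using hη_le)
  simp only [η] at this
  linarith

theorem antitoneOn_rpow_mul_deriv_of_ode
    (hf' : ∀ s ∈ Ioo 0 R, DifferentiableAt ℝ (deriv f) s)
    (hode : ∀ s ∈ Ioo 0 R, deriv (deriv f) s + a / s * deriv f s + g s = 0)
    (hg0 : ∀ s ∈ Ioo 0 R, 0 ≤ g s) :
    AntitoneOn (fun s => s ^ a * deriv f s) (Ioo 0 R) := by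
  have hflux : ∀ s ∈ Ioo 0 R, HasDerivAt (fun r => r ^ a * deriv f r) (-(s ^ a * g s)) s :=
    fun s hs => hasDerivAt_rpow_mul_deriv hs.1 (hf' s hs) (hode s hs)
  refine antitoneOn_of_deriv_nonpos (convex_Ioo 0 R)
    (fun s hs => (hflux s hs).continuousAt.continuousWithinAt) ?_ ?_ <;> rw [interior_Ioo]
  · exact fun s hs => (hflux s hs).differentiableAt.differentiableWithinAt
  · intro s hs
    rw [(hflux s hs).deriv, neg_nonpos]
    exact mul_nonneg (Real.rpow_nonneg hs.1.le a) (hg0 s hs)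

theorem deriv_le_of_ode (ha : 0 ≤ a) {l : ℝ} (hl : 1 < l) (ht : 0 < t) (hlt : l * t < R)
    (hf' : ∀ s ∈ Ioo 0 R, DifferentiableAt ℝ (deriv f) s)
    (hode : ∀ s ∈ Ioo 0 R, deriv (deriv f) s + a / s * deriv f s + g s = 0)
    (hfa : AntitoneOn f (Ioo 0 R)) (hga : AntitoneOn g (Ioo 0 R))
    (hg0 : ∀ s ∈ Ioo 0 R, 0 ≤ g s) {s : ℝ} (hs : s ∈ Icc t (l * t)) :
    deriv f s ≤ -(g t * t / ((a + 1) * l ^ a)) := by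
  have htR : t < R := lt_of_le_of_lt (by nlinarith) hlt
  have hIoc : Ioc 0 t ⊆ Ioo 0 R := fun s hs => ⟨hs.1, hs.2.trans_lt htR⟩
  have hs₀ : 0 < s := ht.trans_le hs.1
  have hfd : ∀ s ∈ Ioo 0 R, deriv f s ≤ 0 := fun s hs => by
    rw [← derivWithin_of_isOpen isOpen_Ioo hs]
    exact hfa.derivWithin_nonpos
  have hflux : s ^ a * deriv f s ≤ -(g t * t ^ (a + 1) / (a + 1)) :=
    (antitoneOn_rpow_mul_deriv_of_ode hf' hode hg0 ⟨ht, htR⟩ ⟨hs₀, hs.2.trans_lt hlt⟩ hs.1).trans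
      (rpow_mul_deriv_le_of_ode (by linarith) ht (fun s hs => hf' s (hIoc hs))
        (fun s hs => hode s (hIoc hs)) (fun s hs => hfd s (hIoc hs)) (hga.mono hIoc))
  set K := g t * t / ((a + 1) * l ^ a)
  have hK : 0 ≤ K := by have := hg0 t ⟨ht, htR⟩; positivity
  have hpow : s ^ a ≤ l ^ a * t ^ a := by
    rw [← Real.mul_rpow (by linarith) ht.le]
    exact Real.rpow_le_rpow hs₀.le hs.2 ha
  have hKs : K * s ^ a ≤ g t * t ^ (a + 1) / (a + 1) := calc
    K * s ^ a ≤ K * (l ^ a * t ^ a) := mul_le_mul_of_nonneg_left hpow hK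
    _ = g t * t ^ (a + 1) / (a + 1) := by
      have : 0 < l ^ a := Real.rpow_pos_of_pos (by linarith) a
      rw [Real.rpow_add_one ht.ne']
      simp only [K]
      field_simp
  nlinarith [Real.rpow_pos_of_pos hs₀ a]

theorem mul_sq_mul_le_of_ode (ha : 0 ≤ a) {l : ℝ} (hl : 1 < l) (ht : 0 < t) (hlt : l * t < R)
    (hf : ∀ s ∈ Ioo 0 R, DifferentiableAt ℝ f s)
    (hf' : ∀ s ∈ Ioo 0 R, DifferentiableAt ℝ (deriv f) s)
    (hode : ∀ s ∈ Ioo 0 R, deriv (deriv f) s + a / s * deriv f s + g s = 0)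
    (hfa : AntitoneOn f (Ioo 0 R)) (hga : AntitoneOn g (Ioo 0 R))
    (hf0 : ∀ s ∈ Ioo 0 R, 0 ≤ f s) (hg0 : ∀ s ∈ Ioo 0 R, 0 ≤ g s) :
    (l - 1) / ((a + 1) * l ^ a) * t ^ 2 * g t ≤ f t := by
  have hIcc : Icc t (l * t) ⊆ Ioo 0 R := fun s hs => ⟨ht.trans_le hs.1, hs.2.trans_lt hlt⟩
  have htlt : t ≤ l * t := by nlinarith
  have hmvt := (convex_Icc t (l * t)).image_sub_le_mul_sub_of_deriv_le
    (fun s hs => (hf s (hIcc hs)).continuousAt.continuousWithinAt)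
    (fun s hs => (hf s (hIcc (interior_subset hs))).differentiableWithinAt)
    (fun s hs => deriv_le_of_ode ha hl ht hlt hf' hode hfa hga hg0 (interior_subset hs))
    t (left_mem_Icc.2 htlt) (l * t) (right_mem_Icc.2 htlt) htlt
  have := hf0 (l * t) (hIcc (right_mem_Icc.2 htlt))
  calc (l - 1) / ((a + 1) * l ^ a) * t ^ 2 * g t = g t * t / ((a + 1) * l ^ a) * (l * t - t) := by
        ring
    _ ≤ f t := by linarith

end RadialODE

/-- If `w₁, w₂ > 0` are `C²` on `B₃` with `-Δ_e w₁ = w₂`, both superharmonic (so their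
spherical averages are non-negative, non-increasing, bounded near `0`, and satisfy the
averaged ODE), then `w̄₁(t) ≥ c t² w̄₂(t)` on `(0,2]` for some `c = c(n) > 0`. -/
theorem avg_estimate {n : ℕ} (hn : 2 ≤ n) :
    ∃ c : ℝ, 0 < c ∧ ∀ w₁ w₂ : En n → ℝ,
      ContDiffOn ℝ 2 w₁ (ball (0 : En n) 3) →
      ContDiffOn ℝ 2 w₂ (ball (0 : En n) 3) →
      (∀ x ∈ ball (0 : En n) 3, 0 < w₁ x) →
      (∀ x ∈ ball (0 : En n) 3, 0 < w₂ x) →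
      (∀ x ∈ ball (0 : En n) 3, -lapE w₁ x = w₂ x) →
      (∀ t ∈ Ioc (0:ℝ) 3, 0 ≤ sAvg w₁ t ∧ 0 ≤ sAvg w₂ t) →
      (∀ s ∈ Ioc (0:ℝ) 3, ∀ t ∈ Ioc (0:ℝ) 3, s ≤ t → sAvg w₁ t ≤ sAvg w₁ s ∧ sAvg w₂ t ≤ sAvg w₂ s) →
      (∃ M : ℝ, ∀ t ∈ Ioc (0:ℝ) 1, sAvg w₁ t ≤ M ∧ sAvg w₂ t ≤ M) →
      (∀ t ∈ Ioc (0:ℝ) 3,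
        deriv (deriv (sAvg w₁)) t + ((n : ℝ) - 1) / t * deriv (sAvg w₁) t + sAvg w₂ t = 0) →
      ∀ t ∈ Ioc (0:ℝ) 2, c * t ^ 2 * sAvg w₂ t ≤ sAvg w₁ t := by
  have hn₁ : 1 ≤ n := by omega
  refine ⟨(5 / 4 - 1) / (n * (5 / 4) ^ ((n : ℝ) - 1)),
    div_pos (by norm_num) (mul_pos (Nat.cast_pos.2 (by omega)) (by positivity)), ?_⟩
  intro w₁ w₂ hw₁ _ _ _ _ hnonneg hanti _ hode t ht
  have hIoo : Ioo (0 : ℝ) 3 ⊆ Ioc 0 3 := Ioo_subset_Ioc_self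
  have key := mul_sq_mul_le_of_ode (a := (n : ℝ) - 1) (sub_nonneg.2 (Nat.one_le_cast.2 hn₁))
    (by norm_num : (1 : ℝ) < 5 / 4) ht.1 (by linarith [ht.2])
    (fun s hs => differentiableAt_sAvg hn₁ hw₁ hs)
    (fun s hs => differentiableAt_deriv_sAvg hn₁ hw₁ hs) (fun s hs => hode s (hIoo hs))
    (fun s hs s' hs' h => (hanti s (hIoo hs) s' (hIoo hs') h).1)
    (fun s hs s' hs' h => (hanti s (hIoo hs) s' (hIoo hs') h).2)
    (fun s hs => (hnonneg s (hIoo hs)).1) (fun s hs => (hnonneg s (hIoo hs)).2)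
  rwa [sub_add_cancel] at key
end
end
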